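/- arXiv:math/0702374 — 8 statements merged into one kernel-verified Lean document; each statement's English description precedes it below -/
import Mathlib

section
/- Let n ≥ 3 be an integer, set c = cos(π/n), L = √(c+1) (so 1 < L), and let β = arcsin(1/√(L²+1)) (so cos β = L/√(L²+1)). Define the complex 2×2 matrices A = [[L², √(L⁴−1)], [√(L⁴−1), L²]] and B = [[L, e^{iβ}√(L²−1)], [e^{−iβ}√(L²−1), L]]. Then det A = det B = 1 and trace(A·B·A⁻¹·B⁻¹) = −2cos(2π/n). -/
open Matrix

theorem stmt_4 (n : ℕ) (hn : 3 ≤ n) (c L β : ℝ)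
    (hc : c = Real.cos (Real.pi / n)) (hLdef : L = Real.sqrt (c + 1))
    (hβ : β = Real.arcsin (1 / Real.sqrt (L ^ 2 + 1)))
    (A B : Matrix (Fin 2) (Fin 2) ℂ)
    (hA : A = !![((L ^ 2 : ℝ) : ℂ), (Real.sqrt (L ^ 4 - 1) : ℂ);
                 (Real.sqrt (L ^ 4 - 1) : ℂ), ((L ^ 2 : ℝ) : ℂ)])
    (hB : B = !![(L : ℂ), Complex.exp (Complex.I * β) * (Real.sqrt (L ^ 2 - 1) : ℂ);
                 Complex.exp (-(Complex.I * β)) * (Real.sqrt (L ^ 2 - 1) : ℂ), (L : ℂ)]) :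
    1 < L ∧ Real.cos β = L / Real.sqrt (L ^ 2 + 1) ∧
    A.det = 1 ∧ B.det = 1 ∧
    (A * B * A⁻¹ * B⁻¹).trace = -2 * (Real.cos (2 * Real.pi / n) : ℂ) := by
  have hn' : (3:ℝ) ≤ n := by exact_mod_cast hn
  have hπ := Real.pi_pos
  have hcpos : 0 < c := by
    rw [hc]
    apply Real.cos_pos_of_mem_Ioo
    constructor
    · have : 0 < Real.pi / n := by positivity
      linarith
    · calc Real.pi / n ≤ Real.pi / 3 := by
            apply div_le_div_of_nonneg_left hπ.le (by norm_num) hn'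
          _ < Real.pi / 2 := by linarith [div_lt_div_of_pos_left hπ (by norm_num : (0:ℝ)<2) (by norm_num : (2:ℝ)<3)]
  have hL1 : 1 < L := by
    rw [hLdef, Real.lt_sqrt (by linarith)]
    nlinarith
  have hL0 : 0 < L := by linarith
  have hL2 : L ^ 2 = c + 1 := by
    rw [hLdef]; exact Real.sq_sqrt (by linarith)
  have hr0 : (0:ℝ) < Real.sqrt (L ^ 2 + 1) := Real.sqrt_pos.mpr (by nlinarith)
  have hr2 : Real.sqrt (L ^ 2 + 1) ^ 2 = L ^ 2 + 1 := Real.sq_sqrt (by nlinarith)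
  have hsin : Real.sin β = 1 / Real.sqrt (L ^ 2 + 1) := by
    rw [hβ, Real.sin_arcsin]
    · have : (0:ℝ) ≤ 1 / Real.sqrt (L ^ 2 + 1) := by positivity
      linarith
    · rw [div_le_one hr0]
      nlinarith
  have key : 1 - (1 / Real.sqrt (L ^ 2 + 1)) ^ 2 = (L / Real.sqrt (L ^ 2 + 1)) ^ 2 := by
    rw [div_pow, div_pow, hr2, one_pow]
    field_simp
    ring
  have hcos : Real.cos β = L / Real.sqrt (L ^ 2 + 1) := by
    rw [hβ, Real.cos_arcsin, key, Real.sqrt_sq (by positivity)]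
  have hcastL2 : ((L ^ 2 : ℝ) : ℂ) = (L : ℂ) ^ 2 := by push_cast; ring
  have hs2C : ((Real.sqrt (L ^ 4 - 1) : ℝ) : ℂ) ^ 2 = (L : ℂ) ^ 4 - 1 := by
    rw [← Complex.ofReal_pow, Real.sq_sqrt (show (0:ℝ) ≤ L ^ 4 - 1 by nlinarith)]
    push_cast; ring
  have ht2C : ((Real.sqrt (L ^ 2 - 1) : ℝ) : ℂ) ^ 2 = (L : ℂ) ^ 2 - 1 := by
    rw [← Complex.ofReal_pow, Real.sq_sqrt (show (0:ℝ) ≤ L ^ 2 - 1 by nlinarith)]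
    push_cast; ring
  have hL2C : (L : ℂ) ^ 2 = (c : ℂ) + 1 := by exact_mod_cast congrArg Complex.ofReal hL2
  have huv : Complex.exp (Complex.I * β) * Complex.exp (-(Complex.I * β)) = 1 := by
    rw [← Complex.exp_add]; simp
  have hdetA : A.det = 1 := by
    rw [hA, Matrix.det_fin_two_of]
    linear_combination -hs2C + (((L ^ 2 : ℝ) : ℂ) + (L : ℂ) ^ 2) * hcastL2
  have hdetB : B.det = 1 := by
    rw [hB, Matrix.det_fin_two_of]
    linear_combination (-(((Real.sqrt (L ^ 2 - 1) : ℝ) : ℂ)) ^ 2) * huv - ht2C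
  have hAinv : A⁻¹ = !![((L ^ 2 : ℝ) : ℂ), -(Real.sqrt (L ^ 4 - 1) : ℂ);
                        -(Real.sqrt (L ^ 4 - 1) : ℂ), ((L ^ 2 : ℝ) : ℂ)] := by
    apply Matrix.inv_eq_right_inv
    rw [hA, Matrix.one_fin_two]
    ext i j
    fin_cases i <;> fin_cases j <;>
      simp only [Matrix.mul_apply, Fin.sum_univ_two, Matrix.cons_val', Matrix.cons_val_zero,
        Matrix.cons_val_one, Matrix.head_cons, Matrix.head_fin_const, Matrix.empty_val',
        Matrix.cons_val_fin_one, Matrix.of_apply, Fin.mk_zero, Fin.mk_one] <;>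
      first
        | linear_combination -hs2C + (((L ^ 2 : ℝ) : ℂ) + (L : ℂ) ^ 2) * hcastL2
        | ring
  have hBinv : B⁻¹ = !![(L : ℂ), -(Complex.exp (Complex.I * β) * (Real.sqrt (L ^ 2 - 1) : ℂ));
                        -(Complex.exp (-(Complex.I * β)) * (Real.sqrt (L ^ 2 - 1) : ℂ)), (L : ℂ)] := by
    apply Matrix.inv_eq_right_inv
    rw [hB, Matrix.one_fin_two]
    ext i j
    fin_cases i <;> fin_cases j <;>
      simp only [Matrix.mul_apply, Fin.sum_univ_two, Matrix.cons_val', Matrix.cons_val_zero,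
        Matrix.cons_val_one, Matrix.head_cons, Matrix.head_fin_const, Matrix.empty_val',
        Matrix.cons_val_fin_one, Matrix.of_apply, Fin.mk_zero, Fin.mk_one] <;>
      first
        | linear_combination (-(((Real.sqrt (L ^ 2 - 1) : ℝ) : ℂ)) ^ 2) * huv - ht2C
        | ring
  have hsin2 : Real.sin β ^ 2 * (L ^ 2 + 1) = 1 := by
    rw [hsin, div_pow, one_pow, hr2]
    field_simp
  have hY2C : ((Real.sin β : ℝ) : ℂ) ^ 2 * ((L : ℂ) ^ 2 + 1) = 1 := by
    exact_mod_cast congrArg Complex.ofReal hsin2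
  have hXC : ((Real.cos β : ℝ) : ℂ) = (L : ℂ) * ((Real.sin β : ℝ) : ℂ) := by
    rw [hcos, hsin]
    push_cast
    ring
  have hu2 : Complex.exp (Complex.I * β) = ((Real.cos β : ℝ) : ℂ) + ((Real.sin β : ℝ) : ℂ) * Complex.I := by
    rw [mul_comm, Complex.exp_mul_I, ← Complex.ofReal_cos, ← Complex.ofReal_sin]
  have hv2 : Complex.exp (-(Complex.I * β)) = ((Real.cos β : ℝ) : ℂ) - ((Real.sin β : ℝ) : ℂ) * Complex.I := by
    rw [show -(Complex.I * (β : ℂ)) = ((-β : ℝ) : ℂ) * Complex.I by push_cast; ring,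
      Complex.exp_mul_I, ← Complex.ofReal_cos, ← Complex.ofReal_sin, Real.cos_neg, Real.sin_neg]
    push_cast
    ring
  have hRHS : Real.cos (2 * Real.pi / n) = 2 * c ^ 2 - 1 := by
    rw [show 2 * Real.pi / n = 2 * (Real.pi / n) by ring, Real.cos_two_mul, hc]
  have hLp1 : ((L : ℂ) ^ 2 + 1) ≠ 0 := by
    have h1 : ((L ^ 2 + 1 : ℝ) : ℂ) ≠ 0 := by
      exact_mod_cast (by positivity : (L ^ 2 + 1 : ℝ) ≠ 0)
    push_cast at h1
    exact h1
  refine ⟨hL1, hcos, hdetA, hdetB, ?_⟩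
  rw [hAinv, hBinv, hA, hB, hu2, hv2, hXC, hcastL2, hRHS,
    show ((2 * c ^ 2 - 1 : ℝ) : ℂ) = 2 * (c : ℂ) ^ 2 - 1 by push_cast; ring]
  rw [Matrix.mul_fin_two, Matrix.mul_fin_two, Matrix.mul_fin_two, Matrix.trace_fin_two_of]
  apply mul_right_cancel₀ hLp1
  set Y : ℂ := ((Real.sin β : ℝ) : ℂ) with hY
  set S : ℂ := ((Real.sqrt (L ^ 4 - 1) : ℝ) : ℂ) with hS
  set T : ℂ := ((Real.sqrt (L ^ 2 - 1) : ℝ) : ℂ) with hT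
  linear_combination
    (2 * S ^ 2 * T ^ 2 * Y ^ 2 + 2 * (L : ℂ) ^ 2 * S ^ 2 * T ^ 2 * Y ^ 2
      + 2 * (L : ℂ) ^ 4 * T ^ 2 * Y ^ 2 + 2 * (L : ℂ) ^ 6 * T ^ 2 * Y ^ 2) * Complex.I_sq
    + (-2 * T ^ 2 * Y ^ 2 - 2 * (L : ℂ) ^ 2 - 2 * (L : ℂ) ^ 4 + 2 * (L : ℂ) ^ 4 * T ^ 2 * Y ^ 2) * hs2C
    + (2 * Y ^ 2 - 6 * (L : ℂ) ^ 4 * Y ^ 2 - 4 * (L : ℂ) ^ 6 * Y ^ 2) * ht2C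
    + (-2 + 4 * (L : ℂ) ^ 2 + 2 * (L : ℂ) ^ 4 - 4 * (L : ℂ) ^ 6) * hY2C
    + (4 - 4 * (c : ℂ) - 4 * (L : ℂ) ^ 2 * (c : ℂ) - 4 * (L : ℂ) ^ 4) * hL2C
end

section
/- Let g ≥ 1 be an integer and let x ∈ ℂ satisfy x^{4g−2} = −1 (so in particular x ≠ 1). Set t = i(1+x)/(1−x). Then ∑_{k=0}^{2g−1} (−1)^{k+1} · binom(4g−2, 2k) · t^{2k} = 0. -/
theorem stmt_10 (g : ℕ) (hg : 1 ≤ g) (x : ℂ) (hx : x ^ (4 * g - 2) = -1)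
    (t : ℂ) (ht : t = Complex.I * (1 + x) / (1 - x)) :
    x ≠ 1 ∧
    ∑ k ∈ Finset.range (2 * g),
      (-1 : ℂ) ^ (k + 1) * (Nat.choose (4 * g - 2) (2 * k) : ℂ) * t ^ (2 * k) = 0 := by
  have hx1 : x ≠ 1 := by
    rintro rfl
    rw [one_pow] at hx
    norm_num at hx
  refine ⟨hx1, ?_⟩
  have hd : (x - 1) ≠ 0 := sub_ne_zero.mpr hx1
  have hd' : (1 - x) ≠ 0 := sub_ne_zero.mpr (Ne.symm hx1)
  set n := 4 * g - 2 with hn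
  set z : ℂ := (1 + x) / (x - 1) with hz
  -- t^2 = -z^2
  have ht2 : t ^ 2 = -z ^ 2 := by
    rw [ht, hz]
    field_simp
    ring_nf
    simp only [Complex.I_sq]
    ring
  have htk : ∀ k : ℕ, t ^ (2 * k) = (-1 : ℂ) ^ k * z ^ (2 * k) := by
    intro k
    rw [pow_mul, pow_mul, ht2, neg_pow]
  -- rewrite sum
  have hrw : ∑ k ∈ Finset.range (2 * g),
      (-1 : ℂ) ^ (k + 1) * (Nat.choose n (2 * k) : ℂ) * t ^ (2 * k)
      = -∑ k ∈ Finset.range (2 * g), (Nat.choose n (2 * k) : ℂ) * z ^ (2 * k) := by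
    rw [← Finset.sum_neg_distrib]
    refine Finset.sum_congr rfl fun k _ => ?_
    rw [htk k]
    have h1 : (-1 : ℂ) ^ (k + 1) * (-1 : ℂ) ^ k = -1 := by
      rw [← pow_add]
      have : k + 1 + k = 2 * k + 1 := by omega
      rw [this, pow_succ, pow_mul]
      norm_num
    calc (-1 : ℂ) ^ (k + 1) * (Nat.choose n (2 * k) : ℂ) * ((-1 : ℂ) ^ k * z ^ (2 * k))
        = ((-1 : ℂ) ^ (k + 1) * (-1 : ℂ) ^ k) * ((Nat.choose n (2 * k) : ℂ) * z ^ (2 * k)) := by ring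
      _ = -((Nat.choose n (2 * k) : ℂ) * z ^ (2 * k)) := by rw [h1]; ring
  rw [hrw, neg_eq_zero]
  -- key binomial identity
  have hbin1 : (1 + z) ^ n = ∑ j ∈ Finset.range (n + 1), z ^ j * (Nat.choose n j : ℂ) := by
    rw [add_comm, add_pow]
    simp [one_pow]
  have hbin2 : (1 - z) ^ n = ∑ j ∈ Finset.range (n + 1), (-z) ^ j * (Nat.choose n j : ℂ) := by
    rw [sub_eq_add_neg, add_comm, add_pow]
    simp [one_pow]
  have himg : (Finset.range (n + 1)).filter (fun j => Even j)
      = (Finset.range (2 * g)).image (fun k => 2 * k) := by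
    ext j
    simp only [Finset.mem_filter, Finset.mem_range, Finset.mem_image]
    constructor
    · rintro ⟨hj, r, hr⟩
      exact ⟨j / 2, by omega, by omega⟩
    · rintro ⟨k, hk, rfl⟩
      exact ⟨by omega, ⟨k, by omega⟩⟩
  have hsum2 : (1 + z) ^ n + (1 - z) ^ n
      = ∑ k ∈ Finset.range (2 * g), 2 * ((Nat.choose n (2 * k) : ℂ) * z ^ (2 * k)) := by
    rw [hbin1, hbin2, ← Finset.sum_add_distrib]
    rw [← Finset.sum_filter_add_sum_filter_not (Finset.range (n + 1)) (fun j => Even j)]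
    have hodd : ∑ j ∈ (Finset.range (n + 1)).filter (fun j => ¬Even j),
        (z ^ j * (Nat.choose n j : ℂ) + (-z) ^ j * (Nat.choose n j : ℂ)) = 0 := by
      refine Finset.sum_eq_zero fun j hj => ?_
      have hjo : Odd j := Nat.not_even_iff_odd.mp (Finset.mem_filter.mp hj).2
      rw [hjo.neg_pow]
      ring
    rw [hodd, add_zero, himg, Finset.sum_image (fun a _ b _ h => by omega)]
    refine Finset.sum_congr rfl fun k _ => ?_
    have : (-z) ^ (2 * k) = z ^ (2 * k) := by
      rw [neg_pow, pow_mul]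
      norm_num
    rw [this]
    ring
  have hzero : (1 + z) ^ n + (1 - z) ^ n = 0 := by
    have h1z : 1 + z = 2 * x / (x - 1) := by rw [hz]; field_simp; ring
    have h2z : 1 - z = -2 / (x - 1) := by rw [hz]; field_simp; ring
    have hne : n = 2 * (2 * g - 1) := by omega
    rw [h1z, h2z, div_pow, div_pow, ← add_div]
    have : (2 * x) ^ n + (-2 : ℂ) ^ n = 2 ^ n * (x ^ n + 1) := by
      rw [mul_pow, hne, pow_mul, pow_mul, pow_mul]
      norm_num
      ring
    rw [this, hx]
    simp
  have h2 : (2 : ℂ) * ∑ k ∈ Finset.range (2 * g), (Nat.choose n (2 * k) : ℂ) * z ^ (2 * k) = 0 := by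
    rw [Finset.mul_sum]
    rw [← hsum2, hzero]
  have := mul_eq_zero.mp h2
  rcases this with h | h
  · norm_num at h
  · exact h
end

section
/- Let a ∈ ℂ with a² ≠ 1, and set μ = (a²+1)²/(a²−1)². For all x, y ∈ ℂ with y² = (x² − a²)(x² − 1)(x² − a² − 1), define X = (2x² − a² − 1)²/(a²−1)² and Y = 4xy(2x² − a² − 1)/(a²−1)³. Then Y² = X(X − 1)(X − μ). -/
theorem stmt_12 (a : ℂ) (ha : a ^ 2 ≠ 1)
    (μ : ℂ) (hμ : μ = (a ^ 2 + 1) ^ 2 / (a ^ 2 - 1) ^ 2)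
    (x y : ℂ) (hy : y ^ 2 = (x ^ 2 - a ^ 2) * (x ^ 2 - 1) * (x ^ 2 - a ^ 2 - 1))
    (X Y : ℂ)
    (hX : X = (2 * x ^ 2 - a ^ 2 - 1) ^ 2 / (a ^ 2 - 1) ^ 2)
    (hY : Y = 4 * x * y * (2 * x ^ 2 - a ^ 2 - 1) / (a ^ 2 - 1) ^ 3) :
    Y ^ 2 = X * (X - 1) * (X - μ) := by
  have h : a ^ 2 - 1 ≠ 0 := sub_ne_zero.mpr ha
  subst hμ hX hY
  field_simp
  linear_combination (16 * x ^ 2 * (2 * x ^ 2 - a ^ 2 - 1) ^ 2) * hy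
end

section
/- Let t ∈ ℂ with t(t+1)(t+2)(t²+2t+2) ≠ 0. Define a = −(3t²+4t+2)(t+2)/(t(t²+2t+2)), c = −(t²+4t+6)(t+1)/(t²+2t+2), b = −(t²+3t+2)/t, and r = (a + c − 1 − b)/2. Then X²(X − a)(X − c) − (1−a)(1−c) = (X − 1)(X − b)(X − r)² as polynomials in X. -/
set_option maxHeartbeats 1000000

open Polynomial

theorem stmt_13 (t : ℂ) (ht : t * (t + 1) * (t + 2) * (t ^ 2 + 2 * t + 2) ≠ 0)
    (a c b r : ℂ)
    (ha : a = -(3 * t ^ 2 + 4 * t + 2) * (t + 2) / (t * (t ^ 2 + 2 * t + 2)))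
    (hc : c = -(t ^ 2 + 4 * t + 6) * (t + 1) / (t ^ 2 + 2 * t + 2))
    (hb : b = -(t ^ 2 + 3 * t + 2) / t)
    (hr : r = (a + c - 1 - b) / 2) :
    (X ^ 2 * (X - C a) * (X - C c) - C ((1 - a) * (1 - c)) : ℂ[X]) =
      (X - 1) * (X - C b) * (X - C r) ^ 2 := by
  have ht0 : t ≠ 0 := by intro h; apply ht; rw [h]; ring
  have ht2 : t ^ 2 + 2 * t + 2 ≠ 0 := fun h => ht (by rw [h]; ring)
  have hm : t * (t ^ 2 + 2 * t + 2) ≠ 0 := mul_ne_zero ht0 ht2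
  have ht2' : t * (t + 2) + 2 ≠ 0 := by convert ht2 using 1; ring
  have hr' : r = -2 * (t + 1) * (t + 2) / (t ^ 2 + 2 * t + 2) := by
    rw [hr, ha, hc, hb]; field_simp [ht0, ht2, hm, ht2']; ring
  have e1 : a + c = 1 + b + 2 * r := by rw [hr]; ring
  have e2 : a * c = b + 2 * r + 2 * r * b + r ^ 2 := by
    rw [ha, hc, hb, hr']; field_simp [ht0, ht2, hm, ht2']; ring
  have e3 : 2 * r * b + r ^ 2 + r ^ 2 * b = 0 := by
    rw [hb, hr']; field_simp [ht0, ht2, hm, ht2']; ring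
  have e4 : (1 - a) * (1 - c) = -(b * r ^ 2) := by
    rw [ha, hc, hb, hr']; field_simp [ht0, ht2, hm, ht2']; ring
  have E1 : (C a + C c : ℂ[X]) = 1 + C b + 2 * C r := by
    simpa [C_ofNat] using congrArg C e1
  have E2 : (C a * C c : ℂ[X]) = C b + 2 * C r + 2 * C r * C b + C r ^ 2 := by
    simpa [C_ofNat] using congrArg C e2
  have E3 : (2 * C r * C b + C r ^ 2 + C r ^ 2 * C b : ℂ[X]) = 0 := by
    simpa [C_ofNat] using congrArg C e3
  have E4 : ((1 - C a) * (1 - C c) : ℂ[X]) = -(C b * C r ^ 2) := by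
    simpa using congrArg C e4
  rw [C_mul, C_sub, C_sub, C_1]
  linear_combination (-(X : ℂ[X]) ^ 3) * E1 + (X : ℂ[X]) ^ 2 * E2 + (X : ℂ[X]) * E3 - E4
end

section
/- Let t ∈ ℂ with t(t+1)(t+2)(t²+2t+2) ≠ 0. Define a = −(3t²+4t+2)(t+2)/(t(t²+2t+2)), c = −(t²+4t+6)(t+1)/(t²+2t+2), λ = −(t²−2)²(3t²+4t+2)³(t²+4t+6)³/(1024·t³·(t²+2t+2)²·(t+2)³·(t+1)³), and p = −(t²+4t+6)(3t²+4t+2)/(4t(t²+2t+2)). Then (X − p)² divides the polynomial X²(X − a)(X − c) − λ(1−a)(1−c); that is, Q(p) = 0 and Q'(p) = 0 where Q(X) = X²(X−a)(X−c) − λ(1−a)(1−c). -/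
open Polynomial

set_option maxHeartbeats 4000000 in
theorem stmt_14 (t : ℂ) (ht : t * (t + 1) * (t + 2) * (t ^ 2 + 2 * t + 2) ≠ 0)
    (a c l p : ℂ)
    (ha : a = -(3 * t ^ 2 + 4 * t + 2) * (t + 2) / (t * (t ^ 2 + 2 * t + 2)))
    (hc : c = -(t ^ 2 + 4 * t + 6) * (t + 1) / (t ^ 2 + 2 * t + 2))
    (hl : l = -((t ^ 2 - 2) ^ 2 * (3 * t ^ 2 + 4 * t + 2) ^ 3 * (t ^ 2 + 4 * t + 6) ^ 3) /
      (1024 * t ^ 3 * (t ^ 2 + 2 * t + 2) ^ 2 * (t + 2) ^ 3 * (t + 1) ^ 3))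
    (hp : p = -((t ^ 2 + 4 * t + 6) * (3 * t ^ 2 + 4 * t + 2)) /
      (4 * t * (t ^ 2 + 2 * t + 2)))
    (Q : ℂ[X])
    (hQ : Q = X ^ 2 * (X - C a) * (X - C c) - C (l * (1 - a) * (1 - c))) :
    (X - C p) ^ 2 ∣ Q ∧ Q.eval p = 0 ∧ (Polynomial.derivative Q).eval p = 0 := by
  have ht0 : t ≠ 0 := fun h => ht (by rw [h]; ring)
  have ht1 : t + 1 ≠ 0 := fun h => ht (by rw [h]; ring)
  have ht2 : t + 2 ≠ 0 := fun h => ht (by rw [h]; ring)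
  have ht3 : t ^ 2 + 2 * t + 2 ≠ 0 := fun h => ht (by rw [h]; ring)
  have h4 : (4 : ℂ) ≠ 0 := by norm_num
  have hk : (1024 : ℂ) ≠ 0 := by norm_num
  have hDp : 4 * t * (t ^ 2 + 2 * t + 2) ≠ 0 := mul_ne_zero (mul_ne_zero h4 ht0) ht3
  have hDa : t * (t ^ 2 + 2 * t + 2) ≠ 0 := mul_ne_zero ht0 ht3
  have hDl : 1024 * t ^ 3 * (t ^ 2 + 2 * t + 2) ^ 2 * (t + 2) ^ 3 * (t + 1) ^ 3 ≠ 0 :=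
    mul_ne_zero (mul_ne_zero (mul_ne_zero (mul_ne_zero hk (pow_ne_zero _ ht0))
      (pow_ne_zero _ ht3)) (pow_ne_zero _ ht2)) (pow_ne_zero _ ht1)
  have hpa : p - a = -((3 * t ^ 2 + 4 * t + 2) * (t ^ 2 - 2)) /
      (4 * t * (t ^ 2 + 2 * t + 2)) := by
    rw [hp, ha, div_sub_div _ _ hDp hDa, div_eq_div_iff (mul_ne_zero hDp hDa) hDp]
    ring
  have hpc : p - c = (t ^ 2 + 4 * t + 6) * (t ^ 2 - 2) / (4 * t * (t ^ 2 + 2 * t + 2)) := by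
    rw [hp, hc, div_sub_div _ _ hDp ht3, div_eq_div_iff (mul_ne_zero hDp ht3) hDp]
    ring
  have key0 : p ^ 2 * (p - a) * (p - c) = l * (1 - a) * (1 - c) := by
    rw [hpa, hpc, hp, ha, hc, hl, div_pow, div_mul_div_comm, div_mul_div_comm,
      one_sub_div hDa, one_sub_div ht3, div_mul_div_comm, div_mul_div_comm,
      div_eq_div_iff
        (mul_ne_zero (mul_ne_zero (pow_ne_zero _ hDp) hDp) hDp)
        (mul_ne_zero (mul_ne_zero hDl hDa) ht3)]
    ring
  have key1 : 2 * p * (p - a) * (p - c) + p ^ 2 * (p - c) + p ^ 2 * (p - a) = 0 := by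
    rw [hpa, hpc, hp]
    field_simp
    ring
  have h0 : Q.eval p = 0 := by
    rw [hQ]
    simp only [eval_sub, eval_mul, eval_pow, eval_X, eval_C]
    linear_combination key0
  have h1 : (Polynomial.derivative Q).eval p = 0 := by
    rw [hQ]
    simp only [derivative_sub, derivative_mul, derivative_pow, derivative_X, derivative_C,
      derivative_X_pow, derivative_sub, eval_sub, eval_add, eval_mul, eval_pow, eval_X,
      eval_C, eval_one, eval_natCast, eval_zero]
    linear_combination key1
  have hmon : (X ^ 2 * (X - C a) * (X - C c) : ℂ[X]).Monic :=
    ((monic_X_pow 2).mul (monic_X_sub_C a)).mul (monic_X_sub_C c)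
  have hdeg : (X ^ 2 * (X - C a) * (X - C c) : ℂ[X]).natDegree = 4 := by
    compute_degree!
  have hQne : Q ≠ 0 := by
    rw [hQ]
    refine (hmon.sub_of_left ?_).ne_zero
    calc (C (l * (1 - a) * (1 - c))).degree ≤ 0 := degree_C_le
      _ < (X ^ 2 * (X - C a) * (X - C c) : ℂ[X]).degree := by
          rw [Polynomial.degree_eq_natDegree hmon.ne_zero, hdeg]
          norm_num
  have h2 : 1 < Q.rootMultiplicity p :=
    (Polynomial.one_lt_rootMultiplicity_iff_isRoot hQne).2 ⟨h0, h1⟩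
  exact ⟨(Polynomial.le_rootMultiplicity_iff hQne).1 h2, h0, h1⟩
end

section
/- Define the rational function λ(t) = −(t²−2)²(3t²+4t+2)³(t²+4t+6)³/(1024·t³·(t²+2t+2)²·(t+2)³·(t+1)³). Then for every t ∈ ℂ with t(t+1)(t+2)(t²+2t+2) ≠ 0 one has λ(2/t) = λ(t), λ(−(t+2)/(t+1)) = λ(t), and λ(−2(t+1)/(t+2)) = λ(t) (each left-hand side being well defined under this hypothesis). -/
set_option maxHeartbeats 2000000

private lemma qcancel_aux (N D c : ℂ) (hc : c ≠ 0) : (N / c) / (D / c) = N / D := by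
  simp only [div_eq_mul_inv, mul_inv, inv_inv]
  linear_combination (N * D⁻¹) * mul_inv_cancel₀ hc

private lemma lval_aux (a b : ℂ) (hb : b ≠ 0) :
    -(((a/b) ^ 2 - 2) ^ 2 * (3 * (a/b) ^ 2 + 4 * (a/b) + 2) ^ 3 * ((a/b) ^ 2 + 4 * (a/b) + 6) ^ 3) /
      (1024 * (a/b) ^ 3 * ((a/b) ^ 2 + 2 * (a/b) + 2) ^ 2 * ((a/b) + 2) ^ 3 * ((a/b) + 1) ^ 3)
    = -((a ^ 2 - 2 * b ^ 2) ^ 2 * (3 * a ^ 2 + 4 * a * b + 2 * b ^ 2) ^ 3 *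
        (a ^ 2 + 4 * a * b + 6 * b ^ 2) ^ 3) /
      (1024 * a ^ 3 * (a ^ 2 + 2 * a * b + 2 * b ^ 2) ^ 2 * (a + 2 * b) ^ 3 * (a + b) ^ 3 * b ^ 3) := by
  have e1 : -(((a/b) ^ 2 - 2) ^ 2 * (3 * (a/b) ^ 2 + 4 * (a/b) + 2) ^ 3 *
      ((a/b) ^ 2 + 4 * (a/b) + 6) ^ 3)
      = -((a ^ 2 - 2 * b ^ 2) ^ 2 * (3 * a ^ 2 + 4 * a * b + 2 * b ^ 2) ^ 3 *
        (a ^ 2 + 4 * a * b + 6 * b ^ 2) ^ 3) / b ^ 16 := by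
    have pk : b ^ 22 * b⁻¹ ^ 22 = 1 := by rw [← mul_pow, mul_inv_cancel₀ hb, one_pow]
    field_simp
  have e2 : 1024 * (a/b) ^ 3 * ((a/b) ^ 2 + 2 * (a/b) + 2) ^ 2 * ((a/b) + 2) ^ 3 * ((a/b) + 1) ^ 3
      = (1024 * a ^ 3 * (a ^ 2 + 2 * a * b + 2 * b ^ 2) ^ 2 * (a + 2 * b) ^ 3 * (a + b) ^ 3 * b ^ 3)
        / b ^ 16 := by
    have pk : b ^ 15 * b⁻¹ ^ 15 = 1 := by rw [← mul_pow, mul_inv_cancel₀ hb, one_pow]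
    field_simp
  rw [e1, e2, qcancel_aux _ _ _ (pow_ne_zero 16 hb)]

theorem stmt_15 (l : ℂ → ℂ)
    (hl : ∀ t : ℂ, l t =
      -((t ^ 2 - 2) ^ 2 * (3 * t ^ 2 + 4 * t + 2) ^ 3 * (t ^ 2 + 4 * t + 6) ^ 3) /
        (1024 * t ^ 3 * (t ^ 2 + 2 * t + 2) ^ 2 * (t + 2) ^ 3 * (t + 1) ^ 3)) :
    ∀ t : ℂ, t * (t + 1) * (t + 2) * (t ^ 2 + 2 * t + 2) ≠ 0 →
      (∀ s ∈ ({2 / t, -(t + 2) / (t + 1), -2 * (t + 1) / (t + 2)} : Set ℂ),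
        s * (s + 1) * (s + 2) * (s ^ 2 + 2 * s + 2) ≠ 0) ∧
      l (2 / t) = l t ∧
      l (-(t + 2) / (t + 1)) = l t ∧
      l (-2 * (t + 1) / (t + 2)) = l t := by
  intro t ht
  have h0 : t ≠ 0 := fun h => ht (by rw [h]; ring)
  have h1 : t + 1 ≠ 0 := fun h => ht (by rw [mul_assoc, mul_comm t, mul_assoc, h]; ring)
  have h2 : t + 2 ≠ 0 := fun h => ht (by
    have e : t * (t + 1) * (t + 2) * (t ^ 2 + 2 * t + 2)
        = (t + 2) * (t * (t + 1) * (t ^ 2 + 2 * t + 2)) := by ring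
    rw [e, h, zero_mul])
  have hq : t ^ 2 + 2 * t + 2 ≠ 0 := fun h => ht (by rw [h, mul_zero])
  have hDt : (1024 : ℂ) * t ^ 3 * (t ^ 2 + 2 * t + 2) ^ 2 * (t + 2) ^ 3 * (t + 1) ^ 3 ≠ 0 :=
    mul_ne_zero (mul_ne_zero (mul_ne_zero (mul_ne_zero (by norm_num)
      (pow_ne_zero _ h0)) (pow_ne_zero _ hq)) (pow_ne_zero _ h2)) (pow_ne_zero _ h1)
  have hbig : (262144 : ℂ) * (t ^ 2 + 2 * t + 2) ^ 2 * (t + 1) ^ 3 * (t + 2) ^ 3 * t ^ 3 ≠ 0 :=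
    mul_ne_zero (mul_ne_zero (mul_ne_zero (mul_ne_zero (by norm_num)
      (pow_ne_zero _ hq)) (pow_ne_zero _ h1)) (pow_ne_zero _ h2)) (pow_ne_zero _ h0)
  refine ⟨?_, ?_, ?_, ?_⟩
  · intro s hs
    rcases hs with hs | hs | hs
    · subst hs
      have e : (2 / t) * (2 / t + 1) * (2 / t + 2) * ((2 / t) ^ 2 + 2 * (2 / t) + 2)
          = 8 * (t + 2) * (t + 1) * (t ^ 2 + 2 * t + 2) / t ^ 5 := by
        field_simp; ring
      rw [e]
      exact div_ne_zero (mul_ne_zero (mul_ne_zero (mul_ne_zero (by norm_num) h2) h1) hq)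
        (pow_ne_zero _ h0)
    · subst hs
      have e : (-(t + 2) / (t + 1)) * (-(t + 2) / (t + 1) + 1) * (-(t + 2) / (t + 1) + 2) *
          ((-(t + 2) / (t + 1)) ^ 2 + 2 * (-(t + 2) / (t + 1)) + 2)
          = (t + 2) * t * (t ^ 2 + 2 * t + 2) / (t + 1) ^ 5 := by
        field_simp; ring
      rw [e]
      exact div_ne_zero (mul_ne_zero (mul_ne_zero h2 h0) hq) (pow_ne_zero _ h1)
    · subst hs
      have e : (-2 * (t + 1) / (t + 2)) * (-2 * (t + 1) / (t + 2) + 1) *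
          (-2 * (t + 1) / (t + 2) + 2) *
          ((-2 * (t + 1) / (t + 2)) ^ 2 + 2 * (-2 * (t + 1) / (t + 2)) + 2)
          = 8 * (t + 1) * t * (t ^ 2 + 2 * t + 2) / (t + 2) ^ 5 := by
        field_simp; ring
      rw [e]
      exact div_ne_zero (mul_ne_zero (mul_ne_zero (mul_ne_zero (by norm_num) h1) h0) hq)
        (pow_ne_zero _ h2)
  · rw [hl (2 / t), hl t, lval_aux 2 t h0]
    have hN : (1024 : ℂ) * 2 ^ 3 * (2 ^ 2 + 2 * 2 * t + 2 * t ^ 2) ^ 2 * (2 + 2 * t) ^ 3 *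
        (2 + t) ^ 3 * t ^ 3 ≠ 0 := by
      rw [show (1024 : ℂ) * 2 ^ 3 * (2 ^ 2 + 2 * 2 * t + 2 * t ^ 2) ^ 2 * (2 + 2 * t) ^ 3 *
        (2 + t) ^ 3 * t ^ 3
        = 262144 * (t ^ 2 + 2 * t + 2) ^ 2 * (t + 1) ^ 3 * (t + 2) ^ 3 * t ^ 3 from by ring]
      exact hbig
    rw [div_eq_div_iff hN hDt]
    ring
  · rw [hl (-(t + 2) / (t + 1)), hl t, lval_aux (-(t + 2)) (t + 1) h1]
    have hN : (1024 : ℂ) * (-(t + 2)) ^ 3 * ((-(t + 2)) ^ 2 + 2 * (-(t + 2)) * (t + 1) +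
        2 * (t + 1) ^ 2) ^ 2 * (-(t + 2) + 2 * (t + 1)) ^ 3 * (-(t + 2) + (t + 1)) ^ 3 *
        (t + 1) ^ 3 ≠ 0 := by
      rw [show (1024 : ℂ) * (-(t + 2)) ^ 3 * ((-(t + 2)) ^ 2 + 2 * (-(t + 2)) * (t + 1) +
        2 * (t + 1) ^ 2) ^ 2 * (-(t + 2) + 2 * (t + 1)) ^ 3 * (-(t + 2) + (t + 1)) ^ 3 * (t + 1) ^ 3
        = 1024 * (t ^ 2 + 2 * t + 2) ^ 2 * (t + 2) ^ 3 * t ^ 3 * (t + 1) ^ 3 from by ring]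
      exact mul_ne_zero (mul_ne_zero (mul_ne_zero (mul_ne_zero (by norm_num)
        (pow_ne_zero _ hq)) (pow_ne_zero _ h2)) (pow_ne_zero _ h0)) (pow_ne_zero _ h1)
    rw [div_eq_div_iff hN hDt]
    ring
  · rw [hl (-2 * (t + 1) / (t + 2)), hl t, lval_aux (-2 * (t + 1)) (t + 2) h2]
    have hN : (1024 : ℂ) * (-2 * (t + 1)) ^ 3 * ((-2 * (t + 1)) ^ 2 + 2 * (-2 * (t + 1)) * (t + 2) +
        2 * (t + 2) ^ 2) ^ 2 * (-2 * (t + 1) + 2 * (t + 2)) ^ 3 * (-2 * (t + 1) + (t + 2)) ^ 3 *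
        (t + 2) ^ 3 ≠ 0 := by
      rw [show (1024 : ℂ) * (-2 * (t + 1)) ^ 3 * ((-2 * (t + 1)) ^ 2 + 2 * (-2 * (t + 1)) * (t + 2) +
        2 * (t + 2) ^ 2) ^ 2 * (-2 * (t + 1) + 2 * (t + 2)) ^ 3 * (-2 * (t + 1) + (t + 2)) ^ 3 *
        (t + 2) ^ 3
        = 262144 * (t ^ 2 + 2 * t + 2) ^ 2 * (t + 1) ^ 3 * (t + 2) ^ 3 * t ^ 3 from by ring]
      exact hbig
    rw [div_eq_div_iff hN hDt]
    ring
end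

section
/- Let a ∈ ℂ with a ≠ 2 and a ≠ −2. Set a₂ = 2(a−6)/(a+2), a₃ = 2(a+6)/(2−a), and α = a + a₂ + a₃. Then a·a₂ + a·a₃ + a₂·a₃ = −36 and a·a₂·a₃ = −4α; equivalently, (X − a)(X − a₂)(X − a₃) = X³ − αX² − 36X + 4α as polynomials in X. -/
open Polynomial

theorem stmt_18 (a : ℂ) (ha2 : a ≠ 2) (ha2' : a ≠ -2)
    (a₂ a₃ α : ℂ) (ha₂ : a₂ = 2 * (a - 6) / (a + 2)) (ha₃ : a₃ = 2 * (a + 6) / (2 - a))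
    (hα : α = a + a₂ + a₃) :
    a * a₂ + a * a₃ + a₂ * a₃ = -36 ∧
    a * a₂ * a₃ = -4 * α ∧
    ((X - C a) * (X - C a₂) * (X - C a₃) : ℂ[X]) =
      X ^ 3 - C α * X ^ 2 - 36 * X + C (4 * α) := by
  have h1 : a + 2 ≠ 0 := fun h => ha2' (by linear_combination h)
  have h2 : (2 : ℂ) - a ≠ 0 := fun h => ha2 (by linear_combination -h)
  have e1 : a * a₂ + a * a₃ + a₂ * a₃ = -36 := by
    subst ha₂ ha₃; field_simp; ring
  have e2 : a * a₂ * a₃ = -4 * α := by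
    subst hα ha₂ ha₃; field_simp; ring
  refine ⟨e1, e2, ?_⟩
  have hα' : α = a + a₂ + a₃ := hα
  have : ((X - C a) * (X - C a₂) * (X - C a₃) : ℂ[X]) =
      X ^ 3 - C (a + a₂ + a₃) * X ^ 2 + C (a * a₂ + a * a₃ + a₂ * a₃) * X - C (a * a₂ * a₃) := by
    simp only [map_add, map_mul]; ring
  rw [this, e1, e2, ← hα']
  simp only [map_neg, map_mul]
  simp only [map_ofNat]
  ring
end

section
/- Let ν ∈ ℂ with ν ≠ 2 and ν ≠ −2. Set ν₂ = 2(6−ν)/(2+ν), ν₃ = 2(6+ν)/(2−ν), and α = (ν·ν₂·ν₃)²/16. Then (X² − ν²)(X² − ν₂²)(X² − ν₃²) = X⁶ − (α + 72)X⁴ + (8α + 1296)X² − 16α as polynomials in X; equivalently, ν² + ν₂² + ν₃² = α + 72 and ν²ν₂² + ν²ν₃² + ν₂²ν₃² = 8α + 1296. -/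
open Polynomial

theorem stmt_19 (ν : ℂ) (h2 : ν ≠ 2) (h2' : ν ≠ -2)
    (ν₂ ν₃ α : ℂ) (hν₂ : ν₂ = 2 * (6 - ν) / (2 + ν)) (hν₃ : ν₃ = 2 * (6 + ν) / (2 - ν))
    (hα : α = (ν * ν₂ * ν₃) ^ 2 / 16) :
    ((X ^ 2 - C (ν ^ 2)) * (X ^ 2 - C (ν₂ ^ 2)) * (X ^ 2 - C (ν₃ ^ 2)) : ℂ[X]) =
      X ^ 6 - C (α + 72) * X ^ 4 + C (8 * α + 1296) * X ^ 2 - C (16 * α) ∧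
    ν ^ 2 + ν₂ ^ 2 + ν₃ ^ 2 = α + 72 ∧
    ν ^ 2 * ν₂ ^ 2 + ν ^ 2 * ν₃ ^ 2 + ν₂ ^ 2 * ν₃ ^ 2 = 8 * α + 1296 := by
  have ha : (2 : ℂ) + ν ≠ 0 := fun h => h2' (by linear_combination h)
  have hb : (2 : ℂ) - ν ≠ 0 := fun h => h2 (by linear_combination -h)
  subst hν₂ hν₃ hα
  have e1 : ν ^ 2 + (2 * (6 - ν) / (2 + ν)) ^ 2 + (2 * (6 + ν) / (2 - ν)) ^ 2 =
      (ν * (2 * (6 - ν) / (2 + ν)) * (2 * (6 + ν) / (2 - ν))) ^ 2 / 16 + 72 := by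
    field_simp
    ring
  have e2 : ν ^ 2 * (2 * (6 - ν) / (2 + ν)) ^ 2 + ν ^ 2 * (2 * (6 + ν) / (2 - ν)) ^ 2 +
      (2 * (6 - ν) / (2 + ν)) ^ 2 * (2 * (6 + ν) / (2 - ν)) ^ 2 =
      8 * ((ν * (2 * (6 - ν) / (2 + ν)) * (2 * (6 + ν) / (2 - ν))) ^ 2 / 16) + 1296 := by
    field_simp
    ring
  have e3 : ν ^ 2 * (2 * (6 - ν) / (2 + ν)) ^ 2 * (2 * (6 + ν) / (2 - ν)) ^ 2 =
      16 * ((ν * (2 * (6 - ν) / (2 + ν)) * (2 * (6 + ν) / (2 - ν))) ^ 2 / 16) := by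
    field_simp
  refine ⟨?_, e1, e2⟩
  rw [← e1, ← e2, ← e3]
  simp only [map_add, map_mul, map_pow]
  ring
end
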